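/- arXiv:0809.0346 — 2 statements merged into one kernel-verified Lean document; each statement's English description precedes it below -/
import Mathlib

section
/- Let θ be a real number with θ ≠ 0 and θ² < π²/2, and let k be a natural number with k ≥ 1. Then the series ∑_{n=k}^∞ l_n · θ^(2n) converges and its sum satisfies ∑_{n=k}^∞ l_n · θ^(2n) < 2 · l_k · θ^(2k). -/
/-!
Euler's formula `ζ(2n) = 2^(2n-1) π^(2n) |B_{2n}| / (2n)!` turns the terms into
`l_n θ^(2n) = ζ(2n) / (n (2n+1)) · r^n` with `r = θ² / π² < 1/2`. Both factors in front of
`r^n` decrease in `n`, so the tail from `k` is dominated by `l_k θ^(2k) ∑ r^n = l_k θ^(2k) / (1 - r)`,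
and `1 / (1 - r) < 2`.
-/

open Real

noncomputable def l (n : ℕ) : ℝ :=
  |((bernoulli (2 * n) : ℚ) : ℝ)| * 2 ^ (2 * n) /
    ((2 * (n : ℝ)) * (Nat.factorial (2 * n + 1) : ℝ))

lemma one_le_tsum_one_div_nat_pow {p : ℕ} (hp : 1 < p) : 1 ≤ ∑' n : ℕ, 1 / (n : ℝ) ^ p := by
  simpa using (summable_one_div_nat_pow.mpr hp).le_tsum 1 (fun n _ => by positivity)

lemma tsum_one_div_nat_pow_le_of_le {p q : ℕ} (hp : 1 < p) (hpq : p ≤ q) :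
    ∑' n : ℕ, 1 / (n : ℝ) ^ q ≤ ∑' n : ℕ, 1 / (n : ℝ) ^ p := by
  refine (summable_one_div_nat_pow.mpr (by omega)).tsum_le_tsum (fun n => ?_)
    (summable_one_div_nat_pow.mpr hp)
  rcases n.eq_zero_or_pos with rfl | hn
  · simp [zero_pow (by omega : q ≠ 0), zero_pow (by omega : p ≠ 0)]
  · exact one_div_le_one_div_of_le (by positivity) (pow_le_pow_right₀ (by exact_mod_cast hn) hpq)

lemma tsum_one_div_nat_pow_two_mul {k : ℕ} (hk : k ≠ 0) :
    ∑' n : ℕ, 1 / (n : ℝ) ^ (2 * k) =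
      2 ^ (2 * k - 1) * π ^ (2 * k) * |((bernoulli (2 * k) : ℚ) : ℝ)| / (2 * k).factorial := by
  have hpos := one_le_tsum_one_div_nat_pow (p := 2 * k) (by omega)
  rw [(hasSum_zeta_nat hk).tsum_eq] at hpos ⊢
  rw [← abs_of_pos (zero_lt_one.trans_le hpos)]
  simp [abs_div, abs_mul, abs_of_pos pi_pos]

lemma l_eq_tsum_div {k : ℕ} (hk : k ≠ 0) :
    l k = (∑' n : ℕ, 1 / (n : ℝ) ^ (2 * k)) / (k * (2 * k + 1) * π ^ (2 * k)) := by
  have h2 : (2 : ℝ) ^ (2 * k) = 2 * 2 ^ (2 * k - 1) := by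
    rw [← pow_succ']; congr 1; omega
  rw [tsum_one_div_nat_pow_two_mul hk, l, Nat.factorial_succ, h2]
  push_cast
  field_simp

lemma l_mul_pow_eq {k : ℕ} (hk : k ≠ 0) (θ : ℝ) :
    l k * θ ^ (2 * k) =
      (∑' n : ℕ, 1 / (n : ℝ) ^ (2 * k)) / (k * (2 * k + 1)) * (θ ^ 2 / π ^ 2) ^ k := by
  rw [l_eq_tsum_div hk, div_pow, ← pow_mul, ← pow_mul]
  field_simp

lemma l_nonneg (n : ℕ) : 0 ≤ l n := by
  unfold l; positivity

lemma l_pos {k : ℕ} (hk : k ≠ 0) : 0 < l k := by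
  rw [l_eq_tsum_div hk]
  have := one_le_tsum_one_div_nat_pow (p := 2 * k) (by omega)
  have : (0 : ℝ) < k := by exact_mod_cast Nat.pos_of_ne_zero hk
  positivity

lemma l_add_mul_pow_le {k : ℕ} (hk : k ≠ 0) (θ : ℝ) (n : ℕ) :
    l (n + k) * θ ^ (2 * (n + k)) ≤ l k * θ ^ (2 * k) * (θ ^ 2 / π ^ 2) ^ n := by
  rw [l_mul_pow_eq (by omega), l_mul_pow_eq hk, mul_assoc, ← pow_add, add_comm k n]
  have hζ := tsum_one_div_nat_pow_le_of_le (p := 2 * k) (q := 2 * (n + k)) (by omega) (by omega)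
  have hζ0 := one_le_tsum_one_div_nat_pow (p := 2 * (n + k)) (by omega)
  have hk1 : (1 : ℝ) ≤ k := by exact_mod_cast Nat.one_le_iff_ne_zero.mpr hk
  gcongr
  all_goals nlinarith

lemma summable_and_tsum_lt_two_mul_of_le_geometric {f : ℕ → ℝ} {c r : ℝ} (hc : 0 < c)
    (hr0 : 0 ≤ r) (hr : r < 1 / 2) (hf0 : ∀ n, 0 ≤ f n) (hf : ∀ n, f n ≤ c * r ^ n) :
    Summable f ∧ ∑' n, f n < 2 * c := by
  have hgeo : HasSum (fun n => c * r ^ n) (c * (1 - r)⁻¹) :=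
    (hasSum_geometric_of_lt_one hr0 (by linarith)).mul_left c
  have hsum : Summable f := hgeo.summable.of_nonneg_of_le hf0 hf
  refine ⟨hsum, (hsum.tsum_le_tsum hf hgeo.summable).trans_lt ?_⟩
  rw [hgeo.tsum_eq, mul_comm 2 c]
  gcongr
  rw [inv_lt_comm₀ (by linarith) two_pos]
  linarith

/-- If `θ ≠ 0`, `θ² < π²/2` and `k ≥ 1`, then `∑_{n=k}^∞ l n * θ^(2n)` converges
and is less than `2 * l k * θ^(2k)`. -/
theorem stmt4 (θ : ℝ) (hθ : θ ≠ 0) (hθ2 : θ ^ 2 < Real.pi ^ 2 / 2)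
    (k : ℕ) (hk : 1 ≤ k) :
    Summable (fun n : ℕ => l (n + k) * θ ^ (2 * (n + k))) ∧
    (∑' n : ℕ, l (n + k) * θ ^ (2 * (n + k))) < 2 * l k * θ ^ (2 * k) := by
  have hk0 : k ≠ 0 := by omega
  have hr : θ ^ 2 / π ^ 2 < 1 / 2 := by
    rw [div_lt_div_iff₀ (by positivity) two_pos]; linarith
  rw [mul_assoc]
  exact summable_and_tsum_lt_two_mul_of_le_geometric
    (mul_pos (l_pos hk0) ((even_two_mul k).pow_pos hθ)) (by positivity) hr
    (fun n => mul_nonneg (l_nonneg _) ((even_two_mul _).pow_nonneg θ)) (l_add_mul_pow_le hk0 θ)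
end

section
/- Let G be a power-commutative group and let a, b ∈ G satisfy a·b⁻³·a·b⁴·a²·b⁴ = 1. Then a and b commute. -/
/-! With `u = a b⁴`, the relation says that `w = b⁻⁴ u²` satisfies `w² = b³`. Power-commutativity
then lets commutation with `b` climb from `w` to `u² = b⁴ w`, from `u²` to `u`, and finally to
`a = u b⁻⁴`. -/

def PowerCommutative (G : Type*) [Group G] : Prop :=
  ∀ x y : G, ∀ p q : ℤ, p ≠ 0 → q ≠ 0 → Commute (x ^ p) (y ^ q) → Commute x y

namespace PowerCommutative

variable {G : Type*} [Group G]

theorem commute_of_commute_pow_left (hG : PowerCommutative G) {x y : G} {n : ℕ} (hn : n ≠ 0)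
    (h : Commute (x ^ n) y) : Commute x y :=
  hG x y n 1 (by exact_mod_cast hn) one_ne_zero (by rwa [zpow_natCast, zpow_one])

theorem commute_of_pow_eq_pow (hG : PowerCommutative G) {x y : G} {m n : ℕ} (hm : m ≠ 0)
    (h : x ^ m = y ^ n) : Commute x y :=
  hG.commute_of_commute_pow_left hm (h ▸ Commute.pow_self y n)

end PowerCommutative

theorem sq_eq_pow_three_of_relation {G : Type*} [Group G] {a b : G}
    (hrel : a * (b ^ 3)⁻¹ * a * b ^ 4 * a ^ 2 * b ^ 4 = 1) :
    ((b ^ 4)⁻¹ * (a * b ^ 4) ^ 2) ^ 2 = b ^ 3 :=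
  calc ((b ^ 4)⁻¹ * (a * b ^ 4) ^ 2) ^ 2
      = (a * b)⁻¹ * (a * (b ^ 3)⁻¹ * a * b ^ 4 * a ^ 2 * b ^ 4) * (a * b) * b ^ 3 := by
        simp only [sq]; group
    _ = b ^ 3 := by rw [hrel]; group

/-- In a power-commutative group, the relation `a b⁻³ a b⁴ a² b⁴ = 1`
forces `a` and `b` to commute. -/
theorem stmt15 {G : Type*} [Group G]
    (hPC : ∀ x y : G, ∀ p q : ℤ, p ≠ 0 → q ≠ 0 → Commute (x ^ p) (y ^ q) → Commute x y)
    (a b : G) (hrel : a * (b ^ 3)⁻¹ * a * b ^ 4 * a ^ 2 * b ^ 4 = 1) :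
    Commute a b := by
  have hG : PowerCommutative G := hPC
  have hb4 : Commute (b ^ 4) b := Commute.pow_self b 4
  have hw : Commute ((b ^ 4)⁻¹ * (a * b ^ 4) ^ 2) b :=
    hG.commute_of_pow_eq_pow two_ne_zero (sq_eq_pow_three_of_relation hrel)
  have hu2 : Commute ((a * b ^ 4) ^ 2) b := by simpa using hb4.mul_left hw
  have hu : Commute (a * b ^ 4) b := hG.commute_of_commute_pow_left two_ne_zero hu2
  simpa using hu.mul_left hb4.inv_left
end
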